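/- arXiv:2503.20773 — 2 statements merged into one kernel-verified Lean document; each statement's English description precedes it below -/
import Mathlib

section
/- Let $\bar{n} \in N_T^d$ and let $1 \le k \le d-1$. Define $\bar{n}^{(k)} = (n_1+1, \dots, n_{d-k}+1, n_{d-k+1}, \dots, n_d) \in N_T^d$ (the normalized form of the degree-$k$ neighbor of $\bar{n}$ in $T$ obtained by decrementing the last $k$ coordinates). Then every $\gamma \in S_{\bar{n}}$ satisfies $\gamma\, l_{\bar{n}^{(k)}} = l_{\bar{n}^{(k)}}$ (i.e. $S_{\bar{n}} \subseteq S_{\bar{n}^{(k)}}$, so that $[l_{\bar{n}^{(k)}}]$ is a friend of $[l_{\bar{n}}]$) if and only if $n_{d-k} > n_{d-k+1}$, i.e. $k$ is a partial sum $d_r + d_{r-1} + \dots$ of block sizes of $\bar{n}$ counted from the end. -/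
open Matrix Polynomial

noncomputable section

/-- `t = X⁻¹` in the Laurent series field `F = 𝔽_q((X))`. -/
def tF (Fq : Type) [Field Fq] : LaurentSeries Fq := HahnSeries.single (-1 : ℤ) (1 : Fq)

/-- The embedding of the polynomial ring `𝔽_q[t]` into `F = 𝔽_q((X))`, sending the
polynomial variable to `t = X⁻¹`. -/
def polyToF (Fq : Type) [Field Fq] : Polynomial Fq →+* LaurentSeries Fq :=
  Polynomial.eval₂RingHom (HahnSeries.C) (tF Fq)

/-- The lattice `l_n̄ = t^{n₁}𝒪e₁ ⊕ ⋯ ⊕ t^{n_d}𝒪e_d` as an `𝒪`-submodule of `F^d`,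
where `𝒪 = 𝔽_q[[X]]` acts on `F = 𝔽_q((X))` via the inclusion, and
`t^{n} = HahnSeries.single (-n) 1`. -/
def lattM (Fq : Type) [Field Fq] {d : ℕ} (n : Fin d → ℤ) :
    Submodule (PowerSeries Fq) (Fin d → LaurentSeries Fq) :=
  Submodule.span (PowerSeries Fq)
    (Set.range fun i : Fin d =>
      (HahnSeries.single (-(n i)) (1 : Fq) : LaurentSeries Fq) •
        (Pi.single i (1 : LaurentSeries Fq) : Fin d → LaurentSeries Fq))

/-- The image `g L` of an `𝒪`-submodule `L ⊆ F^d` under a matrix `g ∈ M_d(F)`. -/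
def actM (Fq : Type) [Field Fq] {d : ℕ} (g : Matrix (Fin d) (Fin d) (LaurentSeries Fq))
    (L : Submodule (PowerSeries Fq) (Fin d → LaurentSeries Fq)) :
    Submodule (PowerSeries Fq) (Fin d → LaurentSeries Fq) :=
  L.map ((g.mulVecLin).restrictScalars (PowerSeries Fq))

/-- The image `a L` of an `𝒪`-submodule `L ⊆ F^d` under scalar multiplication by `a ∈ F`. -/
def scaleM (Fq : Type) [Field Fq] {d : ℕ} (a : LaurentSeries Fq)
    (L : Submodule (PowerSeries Fq) (Fin d → LaurentSeries Fq)) :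
    Submodule (PowerSeries Fq) (Fin d → LaurentSeries Fq) :=
  L.map ((LinearMap.lsmul (LaurentSeries Fq) (Fin d → LaurentSeries Fq) a).restrictScalars
    (PowerSeries Fq))

/-- The image in `M_d(F)` of a matrix over `𝔽_q[t]`. -/
def glToF (Fq : Type) [Field Fq] {d : ℕ} (γ : GL (Fin d) (Polynomial Fq)) :
    Matrix (Fin d) (Fin d) (LaurentSeries Fq) :=
  (γ : Matrix (Fin d) (Fin d) (Polynomial Fq)).map (polyToF Fq)

/-- The stabilizer `S_n̄ = {γ ∈ GL_d(𝔽_q[t]) : γ l_n̄ = l_n̄}`. -/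
def Stab (Fq : Type) [Field Fq] {d : ℕ} (n : Fin d → ℤ) :
    Set (GL (Fin d) (Polynomial Fq)) :=
  {γ | actM Fq (glToF Fq γ) (lattM Fq n) = lattM Fq n}

/-- `N_T^d`: integer tuples `n₁ ≥ n₂ ≥ ⋯ ≥ n_d = 0`. -/
def NT {d : ℕ} (n : Fin d → ℤ) : Prop :=
  (∀ i j : Fin d, i ≤ j → n j ≤ n i) ∧ ∀ i : Fin d, (i : ℕ) = d - 1 → n i = 0

/-- The difference sequence `m_i = n_i - n_{i+1}`. -/
def mdiff {d : ℕ} (n : Fin d → ℤ) (i : ℕ) (h : i + 1 < d) : ℤ :=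
  n ⟨i, Nat.lt_of_succ_lt h⟩ - n ⟨i + 1, h⟩

end

/-!
The lattice `l_n̄` consists of the vectors whose `i`-th coordinate vanishes below `X^{-n_i}`, so
`g l_n̄ ⊆ l_n̄'` says exactly that `(g i j).coeff m = 0` for `m < n_j - n'_i`. Passing from `n̄` to
`n̄⁽ᵏ⁾` tightens this only for `j < d - k ≤ i`, and only at the single exponent `m = n_j - n_i`. If
`n_{d-k} < n_{d-k-1}` (0-indexed) this exponent is positive, and the entries of a matrix over
`𝔽_q[t]` have no positive powers of `X`; applying this to `γ` and `γ⁻¹` gives `S_n̄ ⊆ S_n̄⁽ᵏ⁾`.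
If instead `n_{d-k-1} = n_{d-k}`, the transposition of these two coordinates lies in `S_n̄` but
moves `l_n̄⁽ᵏ⁾`.
-/

namespace LaurentSeries

variable {K : Type*} [Field K]

theorem exists_coe_eq_iff_coeff_neg (f : LaurentSeries K) :
    (∃ F : PowerSeries K, (F : LaurentSeries K) = f) ↔ ∀ m < 0, f.coeff m = 0 := by
  rw [← val_le_one_iff_eq_coe, ← valuation_le_iff_coeff_lt_eq_zero, neg_zero, WithZero.exp_zero]

theorem mem_span_single_one_iff (r : ℤ) (f : LaurentSeries K) :
    f ∈ Submodule.span (PowerSeries K) {(HahnSeries.single r 1 : LaurentSeries K)} ↔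
      ∀ m < r, f.coeff m = 0 := by
  have hinv : (HahnSeries.single r 1 : LaurentSeries K)⁻¹ = HahnSeries.single (-r) 1 :=
    inv_eq_of_mul_eq_one_right (by rw [HahnSeries.single_mul_single, add_neg_cancel, mul_one]; rfl)
  have hne : (HahnSeries.single r 1 : LaurentSeries K) ≠ 0 := HahnSeries.single_ne_zero one_ne_zero
  simp_rw [Submodule.mem_span_singleton, Algebra.smul_def, coe_algebraMap,
    ← eq_mul_inv_iff_mul_eq₀ hne, hinv]
  rw [exists_coe_eq_iff_coeff_neg]
  simp_rw [HahnSeries.coeff_mul_single, mul_one]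
  exact ⟨fun h m hm => by simpa using h (m - r) (by omega), fun h m hm => h _ (by omega)⟩

end LaurentSeries

section Lattices

variable {Fq : Type} [Field Fq] {d : ℕ}

theorem lattM_eq_pi (n : Fin d → ℤ) :
    lattM Fq n = Submodule.pi Set.univ fun i =>
      Submodule.span (PowerSeries Fq) {(HahnSeries.single (-n i) 1 : LaurentSeries Fq)} := by
  rw [lattM, ← Submodule.iSup_map_single, Submodule.span_range_eq_iSup]
  refine iSup_congr fun i => ?_
  rw [Submodule.map_span, Set.image_singleton, LinearMap.coe_single, ← Pi.single_smul',
    smul_eq_mul, mul_one]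

theorem mem_lattM_iff (n : Fin d → ℤ) (v : Fin d → LaurentSeries Fq) :
    v ∈ lattM Fq n ↔ ∀ i, ∀ m < -n i, (v i).coeff m = 0 := by
  simp only [lattM_eq_pi, Submodule.mem_pi, Set.mem_univ, true_imp_iff,
    LaurentSeries.mem_span_single_one_iff]

theorem actM_lattM_le_iff (g : Matrix (Fin d) (Fin d) (LaurentSeries Fq)) (n n' : Fin d → ℤ) :
    actM Fq g (lattM Fq n) ≤ lattM Fq n' ↔
      ∀ i j, ∀ m < n j - n' i, (g i j).coeff m = 0 := by
  have hcol (j : Fin d) : g.mulVecLin.restrictScalars (PowerSeries Fq)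
      ((HahnSeries.single (-n j) 1 : LaurentSeries Fq) • Pi.single j 1) =
        fun i => g i j * HahnSeries.single (-n j) 1 := by
    ext i
    simp [Matrix.mulVec_single, mul_comm]
  rw [actM, lattM, Submodule.map_span_le]
  simp_rw [Set.forall_mem_range, hcol, mem_lattM_iff, HahnSeries.coeff_mul_single, mul_one]
  exact ⟨fun h i j m hm => by simpa using h j i (m - n j) (by omega),
    fun h j i m hm => h i j _ (by omega)⟩

theorem mem_Stab_iff (n : Fin d → ℤ) (γ : GL (Fin d) (Polynomial Fq)) :
    γ ∈ Stab Fq n ↔ actM Fq (glToF Fq γ) (lattM Fq n) = lattM Fq n :=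
  Iff.rfl

theorem actM_mul (g h : Matrix (Fin d) (Fin d) (LaurentSeries Fq))
    (L : Submodule (PowerSeries Fq) (Fin d → LaurentSeries Fq)) :
    actM Fq (g * h) L = actM Fq g (actM Fq h L) := by
  rw [actM, actM, actM, ← Submodule.map_comp, Matrix.mulVecLin_mul, LinearMap.restrictScalars_comp]

theorem actM_one (L : Submodule (PowerSeries Fq) (Fin d → LaurentSeries Fq)) :
    actM Fq 1 L = L := by
  rw [actM, Matrix.mulVecLin_one, LinearMap.restrictScalars_id, Submodule.map_id]

theorem glToF_mul (γ δ : GL (Fin d) (Polynomial Fq)) :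
    glToF Fq (γ * δ) = glToF Fq γ * glToF Fq δ :=
  Matrix.map_mul

theorem glToF_one : glToF Fq (1 : GL (Fin d) (Polynomial Fq)) = 1 :=
  Matrix.map_one _ (map_zero _) (map_one _)

theorem actM_glToF_inv_actM (γ : GL (Fin d) (Polynomial Fq))
    (L : Submodule (PowerSeries Fq) (Fin d → LaurentSeries Fq)) :
    actM Fq (glToF Fq γ⁻¹) (actM Fq (glToF Fq γ) L) = L := by
  rw [← actM_mul, ← glToF_mul, inv_mul_cancel, glToF_one, actM_one]

theorem actM_glToF_eq_self_iff (γ : GL (Fin d) (Polynomial Fq))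
    (L : Submodule (PowerSeries Fq) (Fin d → LaurentSeries Fq)) :
    actM Fq (glToF Fq γ) L = L ↔ actM Fq (glToF Fq γ) L ≤ L ∧ actM Fq (glToF Fq γ⁻¹) L ≤ L := by
  refine ⟨fun h => ⟨h.le, ?_⟩, fun ⟨h, hinv⟩ => h.antisymm ?_⟩
  · conv_lhs => rw [← h]
    rw [actM_glToF_inv_actM]
  · calc L = actM Fq (glToF Fq γ) (actM Fq (glToF Fq γ⁻¹) L) := by
          simpa using (actM_glToF_inv_actM γ⁻¹ L).symm
      _ ≤ actM Fq (glToF Fq γ) L := Submodule.map_mono hinv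

theorem coeff_polyToF_of_pos (p : Polynomial Fq) {m : ℤ} (hm : 0 < m) :
    (polyToF Fq p).coeff m = 0 := by
  induction p using Polynomial.induction_on' with
  | add p q hp hq => rw [map_add, HahnSeries.coeff_add, hp, hq, add_zero]
  | monomial k a =>
    rw [polyToF, coe_eval₂RingHom, Polynomial.eval₂_monomial, tF, HahnSeries.single_pow,
      HahnSeries.C_apply, HahnSeries.single_mul_single, zero_add, HahnSeries.coeff_single_of_ne]
    simp only [nsmul_eq_mul, mul_neg, mul_one]
    omega

theorem actM_lattM_le_of_drop {G : Matrix (Fin d) (Fin d) (LaurentSeries Fq)}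
    (hG : ∀ i j, ∀ m > 0, (G i j).coeff m = 0) {n n' : Fin d → ℤ} {s : ℕ}
    (hdrop : ∀ i j : Fin d, (j : ℕ) < s → s ≤ i → n i < n j)
    (hn' : ∀ i, n' i = if (i : ℕ) < s then n i + 1 else n i)
    (hle : actM Fq G (lattM Fq n) ≤ lattM Fq n) :
    actM Fq G (lattM Fq n') ≤ lattM Fq n' := by
  rw [actM_lattM_le_iff] at hle ⊢
  intro i j m hm
  rw [hn' i, hn' j] at hm
  by_cases hcross : (j : ℕ) < s ∧ s ≤ (i : ℕ)
  · have hdrop_ij := hdrop i j hcross.1 hcross.2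
    simp only [hcross.1, not_lt.2 hcross.2, if_true, if_false] at hm
    rcases le_or_gt m 0 with hm0 | hm0
    · exact hle i j m (by omega)
    · exact hG i j m hm0
  · exact hle i j m (by split_ifs at hm <;> omega)

theorem mem_Stab_of_drop {n n' : Fin d → ℤ} {s : ℕ}
    (hdrop : ∀ i j : Fin d, (j : ℕ) < s → s ≤ i → n i < n j)
    (hn' : ∀ i, n' i = if (i : ℕ) < s then n i + 1 else n i)
    {γ : GL (Fin d) (Polynomial Fq)} (hγ : γ ∈ Stab Fq n) : γ ∈ Stab Fq n' := by
  have hpoly (δ : GL (Fin d) (Polynomial Fq)) : ∀ i j, ∀ m > 0, (glToF Fq δ i j).coeff m = 0 :=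
    fun i j _ hm => coeff_polyToF_of_pos _ hm
  rw [mem_Stab_iff, actM_glToF_eq_self_iff] at hγ ⊢
  exact ⟨actM_lattM_le_of_drop (hpoly γ) hdrop hn' hγ.1,
    actM_lattM_le_of_drop (hpoly γ⁻¹) hdrop hn' hγ.2⟩

theorem actM_permMatrix_lattM_le_iff (σ : Equiv.Perm (Fin d)) (n n' : Fin d → ℤ) :
    actM Fq (σ.permMatrix (LaurentSeries Fq)) (lattM Fq n) ≤ lattM Fq n' ↔
      ∀ i, n (σ i) ≤ n' i := by
  rw [actM_lattM_le_iff]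
  simp only [PEquiv.toMatrix_apply, Equiv.toPEquiv_apply, Option.mem_def, Option.some.injEq]
  constructor
  · intro h i
    by_contra! hlt
    simpa using h i (σ i) 0 (by omega)
  · intro h i j m hm
    split_ifs with hj
    · subst hj
      rw [HahnSeries.coeff_one, if_neg (by have := h i; omega)]
    · exact HahnSeries.coeff_zero

noncomputable def swapGL (Fq : Type) [Field Fq] {d : ℕ} (A B : Fin d) :
    GL (Fin d) (Polynomial Fq) :=
  ⟨swap _ A B, swap _ A B, swap_mul_self A B, swap_mul_self A B⟩

theorem swapGL_mem_Stab_iff (n : Fin d → ℤ) (A B : Fin d) :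
    swapGL Fq A B ∈ Stab Fq n ↔ n A = n B := by
  have hglToF : glToF Fq (swapGL Fq A B) = (Equiv.swap A B).permMatrix _ := map_swap _ A B
  have hinv : (swapGL Fq A B)⁻¹ = swapGL Fq A B := rfl
  rw [mem_Stab_iff, actM_glToF_eq_self_iff, hinv, and_self, hglToF,
    actM_permMatrix_lattM_le_iff]
  refine ⟨fun h => ?_, fun h i => ?_⟩
  · have hA := h A
    have hB := h B
    simp only [Equiv.swap_apply_left, Equiv.swap_apply_right] at hA hB
    exact le_antisymm hB hA
  · rw [Equiv.swap_apply_def]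
    split_ifs with hA hB
    · rw [hA, h]
    · rw [hB, h]
    · exact le_rfl

end Lattices

open Matrix Polynomial in
/-- for `n̄ ∈ N_T^d` and `1 ≤ k ≤ d-1`, let `n̄⁽ᵏ⁾` be the normalized form of the
degree-`k` neighbor of `n̄` in `T` (add `1` to the first `d-k` coordinates).  Then
`S_n̄ ⊆ S_{n̄⁽ᵏ⁾}` (i.e. `[l_{n̄⁽ᵏ⁾}]` is a friend of `[l_n̄]`) iff `n_{d-k} > n_{d-k+1}`. -/
theorem friend_iff (Fq : Type) [Field Fq]
    (d : ℕ) (n : Fin d → ℤ) (hn : NT n)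
    (k : ℕ) (hk1 : 1 ≤ k) (hk2 : k ≤ d - 1)
    (n' : Fin d → ℤ)
    (hn' : ∀ i : Fin d, n' i = if (i : ℕ) < d - k then n i + 1 else n i) :
    (∀ γ ∈ Stab Fq n, γ ∈ Stab Fq n') ↔
      n ⟨d - k, by omega⟩ < n ⟨d - k - 1, by omega⟩ := by
  set A : Fin d := ⟨d - k - 1, by omega⟩
  set B : Fin d := ⟨d - k, by omega⟩
  have hAB : n B ≤ n A := hn.1 A B (Fin.mk_le_mk.2 (by omega))
  constructor
  · intro hsub
    by_contra! hle
    have hswap := hsub _ ((swapGL_mem_Stab_iff n A B).2 (hle.antisymm hAB))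
    rw [swapGL_mem_Stab_iff, hn' A, hn' B, if_pos (show d - k - 1 < d - k by omega),
      if_neg (lt_irrefl _)] at hswap
    omega
  · intro hlt γ
    refine mem_Stab_of_drop (fun i j hj hi => ?_) hn'
    calc n i ≤ n B := hn.1 B i (Fin.mk_le_mk.2 hi)
      _ < n A := hlt
      _ ≤ n j := hn.1 j A (Fin.mk_le_mk.2 (by omega))
end

section
/- The total weight of the fundamental domain $T$ is finite: the family of positive real numbers $\left(\,|S_{\bar{n}}|^{-1}\,\right)_{\bar{n} \in N_T^d}$ is summable, i.e. $\sum_{\bar{n} \in N_T^d} \frac{1}{|S_{\bar{n}}|} < \infty$. (Equivalently, the quotient of the Bruhat–Tits building of $PGL_d(\mathbb{F}_q((1/t)))$ by the non-uniform lattice $PGL_d(\mathbb{F}_q[t])$, while infinite, has finite volume.) -/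
open Matrix Polynomial

/-!
The row-unipotent matrices `1 + e₁ ⊗ (P₁, …, P_d)` with `P₁ = 0` and `deg P_j < n₁ - n_j`
stabilise `l_n̄`, so `|S_n̄| ≥ q^{∑ⱼ (n₁ - n_j)}`. On `N_T^d` the map `n̄ ↦ (n₁ - n_j)_j` is
injective (its last coordinate is `n₁`), so the series is dominated by
`∑_{m ∈ ℕ^d} q^{-(m₁ + ⋯ + m_d)} = (1 - q⁻¹)^{-d}`.
-/

section Lattice

variable {Fq : Type} [Field Fq] {d : ℕ}

lemma polyToF_monomial (k : ℕ) (a : Fq) :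
    polyToF Fq (monomial k a) = HahnSeries.single (-(k : ℤ)) a := by
  rw [polyToF, coe_eval₂RingHom, eval₂_monomial, tF, HahnSeries.single_pow, HahnSeries.C_apply,
    HahnSeries.single_mul_single]
  simp

lemma single_mem_lattM (n : Fin d → ℤ) (i : Fin d) {k : ℤ} (a : Fq) (hk : -n i ≤ k) :
    (Pi.single i (HahnSeries.single k a) : Fin d → LaurentSeries Fq) ∈ lattM Fq n := by
  set x : LaurentSeries Fq := HahnSeries.single (-n i) 1
  have hgen : x • (Pi.single i 1 : Fin d → LaurentSeries Fq) ∈ lattM Fq n :=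
    Submodule.subset_span ⟨i, rfl⟩
  have hshift : (PowerSeries.C a * PowerSeries.X ^ (k + n i).toNat) • x =
      HahnSeries.single k a := by
    rw [Algebra.smul_def, LaurentSeries.coe_algebraMap, map_mul, map_pow,
      HahnSeries.ofPowerSeries_C, HahnSeries.ofPowerSeries_X, HahnSeries.single_pow,
      HahnSeries.C_apply, HahnSeries.single_mul_single, HahnSeries.single_mul_single]
    simp [Int.toNat_of_nonneg (show 0 ≤ k + n i by omega)]
  rw [← Pi.single_smul'] at hgen
  rw [← hshift, ← smul_eq_mul, Pi.single_smul']
  simpa using Submodule.smul_mem _ (PowerSeries.C a * PowerSeries.X ^ (k + n i).toNat) hgen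

lemma single_polyToF_mul_mem_lattM (n : Fin d → ℤ) (r c : Fin d) (p : Fq[X])
    (hp : ∀ k ∈ p.support, (k : ℤ) ≤ n r - n c) :
    (Pi.single r (polyToF Fq p * HahnSeries.single (-n c) 1) : Fin d → LaurentSeries Fq) ∈
      lattM Fq n := by
  change _ ∈ (lattM Fq n).comap (LinearMap.single (PowerSeries Fq) _ r)
  rw [p.as_sum_support, map_sum, Finset.sum_mul]
  refine Submodule.sum_mem _ fun k hk => ?_
  rw [Submodule.mem_comap, LinearMap.coe_single, polyToF_monomial, HahnSeries.single_mul_single,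
    mul_one]
  exact single_mem_lattM n r _ (by have := hp k hk; omega)

end Lattice

section DegreeBounded

variable {ι R : Type*} [Ring R] (n : ι → ℤ)

-- Since `t = X⁻¹`, an entry of degree `≤ n r - n c` maps `t^{n c} 𝒪` into `t^{n r} 𝒪`.
def degreeBoundedMatrices : AddSubgroup (Matrix ι ι R[X]) where
  carrier := {g | ∀ r c, ∀ k ∈ (g r c).support, (k : ℤ) ≤ n r - n c}
  zero_mem' := by simp
  add_mem' {g h} hg hh r c k hk := by
    rcases Finset.mem_union.mp (support_add hk) with hk | hk
    exacts [hg r c k hk, hh r c k hk]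
  neg_mem' {g} hg r c k hk := hg r c k (by simpa [support_neg] using hk)

variable {n}

lemma one_mem_degreeBoundedMatrices [DecidableEq ι] :
    (1 : Matrix ι ι R[X]) ∈ degreeBoundedMatrices n := by
  intro r c k hk
  rcases eq_or_ne r c with rfl | hrc
  · simp only [one_apply_eq, mem_support_iff, coeff_one] at hk
    simp [(ite_ne_right_iff.mp hk).1]
  · simp [one_apply_ne hrc] at hk

lemma vecMulVec_single_mem_degreeBoundedMatrices [DecidableEq ι] {i₀ : ι} {P : ι → R[X]}
    (hP : ∀ c, ∀ k ∈ (P c).support, (k : ℤ) ≤ n i₀ - n c) :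
    vecMulVec (Pi.single i₀ 1) P ∈ degreeBoundedMatrices n := by
  intro r c k hk
  rcases eq_or_ne r i₀ with rfl | hr
  · exact hP c k (by simpa [vecMulVec_apply] using hk)
  · simp [vecMulVec_apply, Pi.single_eq_of_ne hr] at hk

end DegreeBounded

section Stabilizer

variable {Fq : Type} [Field Fq] {d : ℕ} {n : Fin d → ℤ}

lemma actM_map_polyToF_le {g : Matrix (Fin d) (Fin d) Fq[X]}
    (hg : g ∈ degreeBoundedMatrices n) :
    actM Fq (g.map (polyToF Fq)) (lattM Fq n) ≤ lattM Fq n := by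
  rw [actM]
  conv_lhs => rw [lattM]
  rw [Submodule.map_span_le]
  rintro _ ⟨c, rfl⟩
  rw [← Finset.univ_sum_single (LinearMap.restrictScalars _ _ _)]
  refine Submodule.sum_mem _ fun r _ => ?_
  have hentry : (g.map (polyToF Fq) *ᵥ
      ((HahnSeries.single (-n c) 1 : LaurentSeries Fq) • Pi.single c 1)) r =
      polyToF Fq (g r c) * HahnSeries.single (-n c) 1 := by
    simp [← Pi.single_smul']
  rw [LinearMap.restrictScalars_apply, mulVecLin_apply, hentry]
  exact single_polyToF_mul_mem_lattM n r c (g r c) (hg r c)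

lemma mem_Stab_of_mem_degreeBoundedMatrices {γ : GL (Fin d) Fq[X]}
    (hγ : (γ : Matrix (Fin d) (Fin d) Fq[X]) ∈ degreeBoundedMatrices n)
    (hγinv : (↑γ⁻¹ : Matrix (Fin d) (Fin d) Fq[X]) ∈ degreeBoundedMatrices n) :
    γ ∈ Stab Fq n := by
  refine le_antisymm (actM_map_polyToF_le hγ) fun x hx =>
    ⟨_, actM_map_polyToF_le hγinv ⟨x, hx, rfl⟩, ?_⟩
  have hmul : glToF Fq γ * glToF Fq γ⁻¹ = 1 := by
    simp only [glToF, ← Matrix.map_mul, Units.mul_inv, Matrix.map_one _ (map_zero _) (map_one _)]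
  change glToF Fq γ *ᵥ (glToF Fq γ⁻¹ *ᵥ x) = x
  rw [mulVec_mulVec, hmul, one_mulVec]

end Stabilizer

section RowUnipotent

variable {ι R : Type*} [Fintype ι] [DecidableEq ι] [Ring R]

lemma vecMulVec_single_mul_self {i₀ : ι} {P : ι → R} (hP : P i₀ = 0) :
    vecMulVec (Pi.single i₀ 1) P * vecMulVec (Pi.single i₀ 1) P = 0 := by
  rw [vecMulVec_mul_vecMulVec, dotProduct_single_one, hP, zero_smul, vecMulVec_zero]

def rowUnipotent (i₀ : ι) (P : ι → R) (hP : P i₀ = 0) : GL ι R where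
  val := 1 + vecMulVec (Pi.single i₀ 1) P
  inv := 1 - vecMulVec (Pi.single i₀ 1) P
  val_inv := by rw [add_mul, one_mul, mul_sub, mul_one, vecMulVec_single_mul_self hP]; abel
  inv_val := by rw [sub_mul, one_mul, mul_add, mul_one, vecMulVec_single_mul_self hP]; abel

lemma rowUnipotent_inj {i₀ : ι} {P Q : ι → R} (hP : P i₀ = 0) (hQ : Q i₀ = 0)
    (h : rowUnipotent i₀ P hP = rowUnipotent i₀ Q hQ) : P = Q := by
  have hval := add_left_cancel (congrArg Units.val h)
  funext c
  simpa [vecMulVec_apply] using congrFun (congrFun hval i₀) c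

lemma rowUnipotent_mem_Stab {Fq : Type} [Field Fq] {d : ℕ} {n : Fin d → ℤ} {i₀ : Fin d}
    {P : Fin d → Fq[X]} (hP : P i₀ = 0)
    (hdeg : ∀ c, ∀ k ∈ (P c).support, (k : ℤ) ≤ n i₀ - n c) :
    rowUnipotent i₀ P hP ∈ Stab Fq n := by
  have hN := vecMulVec_single_mem_degreeBoundedMatrices hdeg
  exact mem_Stab_of_mem_degreeBoundedMatrices
    (add_mem one_mem_degreeBoundedMatrices hN) (sub_mem one_mem_degreeBoundedMatrices hN)

end RowUnipotent

section Counting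

variable {Fq : Type} [Field Fq] [Fintype Fq] {d : ℕ}

lemma lt_of_mem_support_of_mem_degreeLT {R : Type*} [Semiring R] {N k : ℕ} {p : R[X]}
    (hp : p ∈ degreeLT R N) (hk : k ∈ p.support) : k < N := by
  exact_mod_cast (le_degree_of_mem_supp k hk).trans_lt (mem_degreeLT.mp hp)

lemma card_degreeLT (N : ℕ) : Nat.card (degreeLT Fq N) = Fintype.card Fq ^ N := by
  simp [Nat.card_congr (degreeLTEquiv Fq N).toEquiv, Nat.card_eq_fintype_card]

lemma pow_sum_le_card_Stab (n : Fin d → ℤ) (i₀ : Fin d) [Finite (Stab Fq n)] :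
    Fintype.card Fq ^ ∑ j, (n i₀ - n j).toNat ≤ Nat.card (Stab Fq n) := by
  set N : Fin d → ℕ := fun j => (n i₀ - n j).toNat
  have hP₀ (P : ∀ j, degreeLT Fq (N j)) : (P i₀ : Fq[X]) = 0 := by
    refine support_eq_empty.mp (Finset.eq_empty_of_forall_notMem fun k hk => ?_)
    have := lt_of_mem_support_of_mem_degreeLT (P i₀).2 hk
    simp [N] at this
  have hdeg (P : ∀ j, degreeLT Fq (N j)) (c : Fin d) (k : ℕ) (hk : k ∈ (P c : Fq[X]).support) :
      (k : ℤ) ≤ n i₀ - n c := by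
    have hk : k < (n i₀ - n c).toNat := lt_of_mem_support_of_mem_degreeLT (P c).2 hk
    omega
  let γ (P : ∀ j, degreeLT Fq (N j)) : Stab Fq n :=
    ⟨rowUnipotent i₀ (fun j => P j) (hP₀ P), rowUnipotent_mem_Stab (hP₀ P) (hdeg P)⟩
  have hγ : Function.Injective γ := by
    intro P Q h
    have hPQ := rowUnipotent_inj (P := fun j => (P j : Fq[X])) (Q := fun j => (Q j : Fq[X]))
      (hP₀ P) (hP₀ Q) (congrArg Subtype.val h)
    exact funext fun j => Subtype.ext (congrFun hPQ j)
  calc Fintype.card Fq ^ ∑ j, N j = Nat.card (∀ j, degreeLT Fq (N j)) := by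
        simp [Nat.card_pi, card_degreeLT, Finset.prod_pow_eq_pow_sum]
    _ ≤ Nat.card (Stab Fq n) := Nat.card_le_card_of_injective γ hγ

-- `S_n̄` is finite, but the bound holds regardless since `Nat.card` of an infinite type is `0`.
lemma inv_card_Stab_le (n : Fin d → ℤ) (i₀ : Fin d) :
    (Nat.card (Stab Fq n) : ℝ)⁻¹ ≤ (Fintype.card Fq : ℝ)⁻¹ ^ ∑ j, (n i₀ - n j).toNat := by
  rw [inv_pow]
  rcases finite_or_infinite (Stab Fq n) with hfin | hinf
  · exact inv_anti₀ (by positivity) (by exact_mod_cast pow_sum_le_card_Stab n i₀)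
  · rw [Nat.card_eq_zero_of_infinite, Nat.cast_zero, _root_.inv_zero]
    positivity

end Counting

lemma summable_pow_sum {r : ℝ} (h₀ : 0 ≤ r) (h₁ : r < 1) :
    ∀ k : ℕ, Summable fun m : Fin k → ℕ => r ^ ∑ j, m j
  | 0 => Summable.of_finite
  | k + 1 => by
    rw [← (Fin.consEquiv fun _ => ℕ).summable_iff]
    have hsplit : (fun m : Fin (k + 1) → ℕ => r ^ ∑ j, m j) ∘ Fin.consEquiv (fun _ => ℕ) =
        fun p : ℕ × (Fin k → ℕ) => r ^ p.1 * r ^ ∑ j, p.2 j := by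
      funext p
      simp only [Function.comp_apply, Fin.consEquiv_apply, Fin.sum_univ_succ, Fin.cons_zero,
        Fin.cons_succ, pow_add]
    rw [hsplit]
    exact Summable.mul_of_nonneg (f := fun i : ℕ => r ^ i)
      (g := fun m : Fin k → ℕ => r ^ ∑ j, m j)
      (summable_geometric_of_lt_one h₀ h₁) (summable_pow_sum h₀ h₁ k)
      (fun _ => by positivity) fun _ => by positivity

namespace NT

variable {d : ℕ} {n : Fin (d + 1) → ℤ}

lemma le_apply_zero (hn : NT n) (j : Fin (d + 1)) : n j ≤ n 0 := hn.1 0 j (Fin.zero_le j)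

lemma nonneg (hn : NT n) (j : Fin (d + 1)) : 0 ≤ n j :=
  (hn.2 (Fin.last d) (by simp)).symm.le.trans (hn.1 j _ (Fin.le_last j))

lemma injective_toNat_apply_zero_sub :
    Function.Injective fun n : {n : Fin (d + 1) → ℤ // NT n} =>
      fun j => (n.1 0 - n.1 j).toNat := by
  rintro ⟨n, hn⟩ ⟨n', hn'⟩ h
  have hgap (j : Fin (d + 1)) : (n 0 - n j).toNat = (n' 0 - n' j).toNat := congrFun h j
  have h₀ : n 0 = n' 0 := by
    have := hgap (Fin.last d)
    rw [hn.2 (Fin.last d) (by simp), hn'.2 (Fin.last d) (by simp)] at this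
    have := hn.nonneg 0
    have := hn'.nonneg 0
    omega
  refine Subtype.ext (funext fun j => ?_)
  change n j = n' j
  have := hgap j
  have := hn.le_apply_zero j
  have := hn'.le_apply_zero j
  omega

end NT

open Matrix Polynomial in
theorem covolume_finite_general (Fq : Type) [Field Fq] [Fintype Fq] (d : ℕ) :
    Summable (fun n : {n : Fin d → ℤ // NT n} => ((Nat.card (Stab Fq n.1) : ℝ))⁻¹) := by
  obtain _ | d := d
  · exact Summable.of_finite
  have hq : (Fintype.card Fq : ℝ)⁻¹ < 1 :=
    inv_lt_one_of_one_lt₀ (by exact_mod_cast Fintype.one_lt_card)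
  have hdom := (summable_pow_sum (by positivity) hq (d + 1)).comp_injective
    NT.injective_toNat_apply_zero_sub
  exact hdom.of_nonneg_of_le (fun _ => by positivity) fun n => inv_card_Stab_le n.1 0

open Matrix Polynomial in
/-- the total weight of the fundamental domain is finite: the family
`(1/|S_n̄|)_{n̄ ∈ N_T^d}` of positive reals is summable. -/
theorem covolume_finite (Fq : Type) [Field Fq] [Fintype Fq] (d : ℕ) (hd : 2 ≤ d) :
    Summable (fun n : {n : Fin d → ℤ // NT n} => ((Nat.card (Stab Fq n.1) : ℝ))⁻¹) :=
  covolume_finite_general Fq d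
end
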